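/- arXiv:0911.5167 — 5 statements merged into one kernel-verified Lean document; each statement's English description precedes it below -/
import Mathlib

section
/- Let V be a finite-dimensional real inner product space, let Δ ⊆ V be a closed convex set with 0 ∈ Δ, and let ∇ := {x ∈ V | ⟨u, x⟩ ≥ −1 for all u ∈ Δ} be its polar. Let v ∈ V and suppose that the set {t ∈ ℝ | t ≥ 0 and t•v ∈ ∇} is bounded above with supremum T > 0. Then the infimum of the set {⟨u, v⟩ | u ∈ Δ} equals −1/T. -/
open RealInnerProductSpace

/-! Writing `m` for the infimum of `⟪·, v⟫` on `Δ`, a ray point `t • v` (`t ≥ 0`) lies in the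
polar exactly when `-1 ≤ t * m`. If `m ≥ 0` every `t ≥ 0` qualifies, which is impossible for a
bounded set; so `m < 0`, the admissible `t` form the interval `[0, -1/m]`, and `T = -1/m`.
The infimum is finite because `T > 0` provides some admissible `t > 0`, giving the lower
bound `-1/t`. -/

lemma neg_one_le_mul_csInf_iff {S : Set ℝ} (hne : S.Nonempty) (hbdd : BddBelow S) {t : ℝ}
    (ht : 0 ≤ t) : -1 ≤ t * sInf S ↔ ∀ s ∈ S, -1 ≤ t * s := by
  rcases ht.eq_or_lt with rfl | ht
  · simp
  simp only [← div_le_iff₀' ht]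
  exact le_csInf_iff hbdd hne

lemma eq_neg_inv_of_isLUB_setOf_neg_one_le_mul {m T : ℝ}
    (hT : IsLUB {t : ℝ | 0 ≤ t ∧ -1 ≤ t * m} T) : m = -1 / T := by
  have hm : m < 0 := by
    by_contra! hm
    have hT0 : 0 ≤ T := hT.1 ⟨le_rfl, by simp⟩
    have : T + 1 ≤ T := hT.1 ⟨by linarith, by nlinarith⟩
    linarith
  have hIcc : {t : ℝ | 0 ≤ t ∧ -1 ≤ t * m} = Set.Icc 0 (-1 / m) := by
    ext t
    simp only [Set.mem_ofPred_eq, Set.mem_Icc, le_div_iff_of_neg hm]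
  rw [hIcc] at hT
  have hT' : T = -1 / m := hT.unique (isLUB_Icc (div_nonneg_of_nonpos (by norm_num) hm.le))
  rw [hT']
  field_simp

lemma csInf_eq_neg_inv_of_isLUB {S : Set ℝ} (hne : S.Nonempty) {T : ℝ}
    (hT : IsLUB {t : ℝ | 0 ≤ t ∧ ∀ s ∈ S, -1 ≤ t * s} T) (hTpos : 0 < T) :
    sInf S = -1 / T := by
  obtain ⟨t, ⟨-, hts⟩, htpos, -⟩ := hT.exists_between hTpos
  have hbdd : BddBelow S := ⟨-1 / t, fun s hs => (div_le_iff₀' htpos).2 (hts s hs)⟩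
  refine eq_neg_inv_of_isLUB_setOf_neg_one_le_mul ?_
  convert hT using 1
  ext t
  exact and_congr_right fun ht => neg_one_le_mul_csInf_iff hne hbdd ht

theorem pwl_eq_neg_inv_sup_general
    {V : Type*} [NormedAddCommGroup V] [InnerProductSpace ℝ V]
    (Δ : Set V) (h0 : (0 : V) ∈ Δ)
    (v : V) (T : ℝ)
    (hT : IsLUB {t : ℝ | 0 ≤ t ∧ t • v ∈ {x : V | ∀ u ∈ Δ, ⟪u, x⟫ ≥ -1}} T)
    (hTpos : 0 < T) :
    sInf ((fun u => ⟪u, v⟫) '' Δ) = -1 / T := by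
  refine csInf_eq_neg_inv_of_isLUB ((Set.nonempty_of_mem h0).image _) ?_ hTpos
  simpa only [Set.forall_mem_image, Set.mem_ofPred_eq, real_inner_smul_right, ge_iff_le] using hT

/-- **Lemma 4.5 (pwl-characterization).** For a closed convex set `Δ ∋ 0` with polar
`∇ = {x | ⟪u, x⟫ ≥ -1 ∀ u ∈ Δ}`, if the set `{t ≥ 0 | t • v ∈ ∇}` is bounded above
with supremum `T > 0`, then `pwl(Δ)(v) = inf {⟪u, v⟫ | u ∈ Δ} = -1/T`. -/
theorem pwl_eq_neg_inv_sup
    {V : Type*} [NormedAddCommGroup V] [InnerProductSpace ℝ V]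
    [FiniteDimensional ℝ V]
    (Δ : Set V) (hcl : IsClosed Δ) (hconv : Convex ℝ Δ) (h0 : (0 : V) ∈ Δ)
    (v : V) (T : ℝ)
    (hT : IsLUB {t : ℝ | 0 ≤ t ∧ t • v ∈ {x : V | ∀ u ∈ Δ, ⟪u, x⟫ ≥ -1}} T)
    (hTpos : 0 < T) :
    sInf ((fun u => ⟪u, v⟫) '' Δ) = -1 / T :=
  pwl_eq_neg_inv_sup_general Δ h0 v T hT hTpos
end

section
/- Let V be a finite-dimensional real inner product space, let σ ⊆ V be a closed convex cone containing 0, and let f : V → ℝ be a function that on σ is nonnegative, positively homogeneous (f(t•v) = t·f(v) for all t ≥ 0 and v ∈ σ), subadditive (f(v+w) ≤ f(v) + f(w) for all v, w ∈ σ), and lower semicontinuous on σ. Set ∇_f := {v ∈ σ | f(v) ≤ 1} and let Δ_f := {u ∈ V | ⟨u, w⟩ ≥ −1 for all w ∈ ∇_f} be its polar. Then for every v ∈ σ, the infimum of {⟨u, v⟩ | u ∈ Δ_f} equals −f(v). -/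
/-!
Write `∇ = {x ∈ σ | f x ≤ 1}`. Homogeneity puts `c⁻¹ • v` in `∇` exactly when `f v ≤ c`, so every
`u` in the polar of `∇` satisfies `⟪u, v⟫ ≥ -c` for all `c > f v`, i.e. `⟪u, v⟫ ≥ -f v`.
Conversely, subadditivity and homogeneity make `f` convex and lower semicontinuity makes `∇`
closed, so for `0 < c < f v` the point `c⁻¹ • v ∉ ∇` is strictly separated from `∇` by a hyperplane
`⟪u, ·⟫ = -1` with `u` in the polar, giving `⟪u, v⟫ < -c`.
-/

open RealInnerProductSpace

/-- The one-sided polar `S^∨`. -/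
def innerPolar {V : Type*} [NormedAddCommGroup V] [InnerProductSpace ℝ V] (S : Set V) : Set V :=
  {u | ∀ w ∈ S, ⟪u, w⟫ ≥ -1}

theorem zero_mem_innerPolar {V : Type*} [NormedAddCommGroup V] [InnerProductSpace ℝ V]
    (S : Set V) : (0 : V) ∈ innerPolar S := fun w _ => by
  rw [inner_zero_left]
  norm_num

theorem exists_mem_innerPolar_inner_lt_neg_one {V : Type*} [NormedAddCommGroup V]
    [InnerProductSpace ℝ V] [CompleteSpace V] {S : Set V} (hconv : Convex ℝ S) (hcl : IsClosed S)
    (h0 : (0 : V) ∈ S) {p : V} (hp : p ∉ S) : ∃ u ∈ innerPolar S, ⟪u, p⟫ < -1 := by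
  obtain ⟨g, b, hgS, hgp⟩ := geometric_hahn_banach_closed_point hconv hcl hp
  have hb : 0 < b := by simpa using hgS 0 h0
  set u : V := -(b⁻¹ • (InnerProductSpace.toDual ℝ V).symm g)
  have hu : ∀ x, ⟪u, x⟫ = -(b⁻¹ * g x) := fun x => by
    simp only [u, inner_neg_left, real_inner_smul_left, InnerProductSpace.toDual_symm_apply]
  refine ⟨u, fun w hw => ?_, ?_⟩
  · have := (inv_mul_lt_one₀ hb).mpr (hgS w hw)
    rw [hu]
    linarith
  · have := (one_lt_inv_mul₀ hb).mpr hgp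
    rw [hu]
    linarith

theorem LowerSemicontinuousOn.isClosed_sep_le {α γ : Type*} [TopologicalSpace α] [LinearOrder γ]
    {f : α → γ} {s : Set α} (hf : LowerSemicontinuousOn f s) (hs : IsClosed s) (c : γ) :
    IsClosed {x ∈ s | f x ≤ c} := by
  obtain ⟨t, ht, hst⟩ := lowerSemicontinuousOn_iff_preimage_Iic.mp hf c
  exact (hst ▸ hs.inter ht : IsClosed (s ∩ f ⁻¹' Set.Iic c))

section HomogeneousSublevel

variable {V : Type*} [NormedAddCommGroup V] [InnerProductSpace ℝ V] {σ : Set V} {f : V → ℝ}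

theorem convexOn_of_subadditive_of_homogeneous (hconv : Convex ℝ σ)
    (hcone : ∀ t : ℝ, 0 ≤ t → ∀ v ∈ σ, t • v ∈ σ)
    (hhom : ∀ t : ℝ, 0 ≤ t → ∀ v ∈ σ, f (t • v) = t * f v)
    (hsub : ∀ v ∈ σ, ∀ w ∈ σ, f (v + w) ≤ f v + f w) : ConvexOn ℝ σ f :=
  ⟨hconv, fun x hx y hy a b ha hb _ =>
    (hsub _ (hcone a ha x hx) _ (hcone b hb y hy)).trans_eq
      (by rw [hhom a ha x hx, hhom b hb y hy]; rfl)⟩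

theorem inv_smul_mem_sublevel_iff (hcone : ∀ t : ℝ, 0 ≤ t → ∀ v ∈ σ, t • v ∈ σ)
    (hhom : ∀ t : ℝ, 0 ≤ t → ∀ v ∈ σ, f (t • v) = t * f v) {v : V} (hv : v ∈ σ) {c : ℝ}
    (hc : 0 < c) : c⁻¹ • v ∈ {x ∈ σ | f x ≤ 1} ↔ f v ≤ c := by
  rw [Set.mem_ofPred_eq, hhom _ (inv_nonneg.mpr hc.le) v hv, inv_mul_le_one₀ hc]
  exact and_iff_right (hcone _ (inv_nonneg.mpr hc.le) v hv)

theorem neg_le_inner_of_mem_innerPolar_sublevel (hcone : ∀ t : ℝ, 0 ≤ t → ∀ v ∈ σ, t • v ∈ σ)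
    (hhom : ∀ t : ℝ, 0 ≤ t → ∀ v ∈ σ, f (t • v) = t * f v) (hnn : ∀ v ∈ σ, 0 ≤ f v) {v : V}
    (hv : v ∈ σ) {u : V} (hu : u ∈ innerPolar {x ∈ σ | f x ≤ 1}) : -f v ≤ ⟪u, v⟫ := by
  refine neg_le.mp (le_of_forall_gt_imp_ge_of_dense fun c hc => ?_)
  have hc0 : 0 < c := (hnn v hv).trans_lt hc
  have := hu _ ((inv_smul_mem_sublevel_iff hcone hhom hv hc0).mpr hc.le)
  rw [real_inner_smul_right, ge_iff_le, le_inv_mul_iff₀ hc0] at this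
  linarith

theorem exists_mem_innerPolar_sublevel_inner_lt [FiniteDimensional ℝ V] (hcl : IsClosed σ)
    (hconv : Convex ℝ σ) (hcone : ∀ t : ℝ, 0 ≤ t → ∀ v ∈ σ, t • v ∈ σ)
    (hhom : ∀ t : ℝ, 0 ≤ t → ∀ v ∈ σ, f (t • v) = t * f v)
    (hsub : ∀ v ∈ σ, ∀ w ∈ σ, f (v + w) ≤ f v + f w) (hlsc : LowerSemicontinuousOn f σ) {v : V}
    (hv : v ∈ σ) {c : ℝ} (hc : 0 < c) (hcv : c < f v) :
    ∃ u ∈ innerPolar {x ∈ σ | f x ≤ 1}, ⟪u, v⟫ < -c := by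
  have h0 : (0 : V) ∈ {x ∈ σ | f x ≤ 1} := by
    have hf0 := hhom 0 le_rfl v hv
    rw [zero_smul, zero_mul] at hf0
    exact ⟨zero_smul ℝ v ▸ hcone 0 le_rfl v hv, hf0.trans_le zero_le_one⟩
  have hp : c⁻¹ • v ∉ {x ∈ σ | f x ≤ 1} := by
    rw [inv_smul_mem_sublevel_iff hcone hhom hv hc]
    exact hcv.not_ge
  obtain ⟨u, hu, hup⟩ := exists_mem_innerPolar_inner_lt_neg_one
    ((convexOn_of_subadditive_of_homogeneous hconv hcone hhom hsub).convex_le 1)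
    (hlsc.isClosed_sep_le hcl 1) h0 hp
  refine ⟨u, hu, ?_⟩
  rw [real_inner_smul_right, inv_mul_lt_iff₀ hc] at hup
  linarith

end HomogeneousSublevel

theorem pwl_of_dual_of_sublevel_eq_neg_general
    {V : Type*} [NormedAddCommGroup V] [InnerProductSpace ℝ V]
    [FiniteDimensional ℝ V]
    (σ : Set V) (hσcl : IsClosed σ) (hσconv : Convex ℝ σ)
    (hσcone : ∀ t : ℝ, 0 ≤ t → ∀ v ∈ σ, t • v ∈ σ)
    (f : V → ℝ)
    (hnn : ∀ v ∈ σ, 0 ≤ f v)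
    (hhom : ∀ t : ℝ, 0 ≤ t → ∀ v ∈ σ, f (t • v) = t * f v)
    (hsub : ∀ v ∈ σ, ∀ w ∈ σ, f (v + w) ≤ f v + f w)
    (hlsc : LowerSemicontinuousOn f σ) :
    ∀ v ∈ σ,
      sInf ((fun u => ⟪u, v⟫) ''
          {u : V | ∀ w ∈ {x ∈ σ | f x ≤ 1}, ⟪u, w⟫ ≥ -1}) = -f v := by
  intro v hv
  refine csInf_eq_of_forall_ge_of_forall_gt_exists_lt
    (Set.image_nonempty.mpr ⟨0, zero_mem_innerPolar _⟩) ?_ fun w hw => ?_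
  · rintro _ ⟨u, hu, rfl⟩
    exact neg_le_inner_of_mem_innerPolar_sublevel hσcone hhom hnn hv hu
  rcases lt_or_ge 0 w with hw0 | hw0
  · exact ⟨_, ⟨0, zero_mem_innerPolar _, rfl⟩, (inner_zero_left v).trans_lt hw0⟩
  obtain ⟨c, hwc, hcv⟩ := exists_between (neg_lt.mp hw)
  obtain ⟨u, hu, huv⟩ := exists_mem_innerPolar_sublevel_inner_lt hσcl hσconv hσcone hhom hsub hlsc
    hv (by linarith) hcv
  exact ⟨_, ⟨u, hu, rfl⟩, by linarith⟩

/-- **Lemma 4.6 (pwl<->polyhedra).** Let `f` be nonnegative, positively homogeneous,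
subadditive and lower semicontinuous on a closed convex cone `σ ∋ 0`. With
`∇_f = {v ∈ σ | f v ≤ 1}` and `Δ_f` its polar, one has `pwl(Δ_f) = -f` on `σ`. -/
theorem pwl_of_dual_of_sublevel_eq_neg
    {V : Type*} [NormedAddCommGroup V] [InnerProductSpace ℝ V]
    [FiniteDimensional ℝ V]
    (σ : Set V) (hσcl : IsClosed σ) (hσconv : Convex ℝ σ) (h0 : (0 : V) ∈ σ)
    (hσcone : ∀ t : ℝ, 0 ≤ t → ∀ v ∈ σ, t • v ∈ σ)
    (f : V → ℝ)
    (hnn : ∀ v ∈ σ, 0 ≤ f v)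
    (hhom : ∀ t : ℝ, 0 ≤ t → ∀ v ∈ σ, f (t • v) = t * f v)
    (hsub : ∀ v ∈ σ, ∀ w ∈ σ, f (v + w) ≤ f v + f w)
    (hlsc : LowerSemicontinuousOn f σ) :
    ∀ v ∈ σ,
      sInf ((fun u => ⟪u, v⟫) ''
          {u : V | ∀ w ∈ {x ∈ σ | f x ≤ 1}, ⟪u, w⟫ ≥ -1}) = -f v :=
  pwl_of_dual_of_sublevel_eq_neg_general σ hσcl hσconv hσcone f hnn hhom hsub hlsc
end

section
/- Let V be a finite-dimensional real inner product space, let σ ⊆ V be a convex cone containing 0, and let f : V → ℝ be nonnegative, positively homogeneous (f(t•v) = t·f(v) for t ≥ 0, v ∈ σ), and subadditive (f(v+w) ≤ f(v) + f(w) for v, w ∈ σ) on σ. Define ∇_f as the convex hull of the set {(f(w))^{-1}•w | w ∈ σ, f(w) > 0} ∪ {w ∈ σ | f(w) = 0}. Then for every v ∈ σ with f(v) > 0, the set {t ∈ ℝ | t ≥ 0 and t•v ∈ ∇_f} has supremum exactly (f(v))^{-1}. -/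
open RealInnerProductSpace

/-- For a nonnegative, positively homogeneous, subadditive function `f` on a convex
cone `σ ∋ 0`, and `∇_f := conv({f(w)⁻¹ • w | w ∈ σ, f w > 0} ∪ {w ∈ σ | f w = 0})`,
the set `{t ≥ 0 | t • v ∈ ∇_f}` has supremum exactly `(f v)⁻¹` whenever `v ∈ σ`
with `f v > 0`. -/
theorem sup_dilations_in_nabla_eq_inv
    {V : Type*} [NormedAddCommGroup V] [InnerProductSpace ℝ V]
    [FiniteDimensional ℝ V]
    (σ : Set V) (hσconv : Convex ℝ σ) (h0 : (0 : V) ∈ σ)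
    (hσcone : ∀ t : ℝ, 0 ≤ t → ∀ v ∈ σ, t • v ∈ σ)
    (f : V → ℝ)
    (hnn : ∀ v ∈ σ, 0 ≤ f v)
    (hhom : ∀ t : ℝ, 0 ≤ t → ∀ v ∈ σ, f (t • v) = t * f v)
    (hsub : ∀ v ∈ σ, ∀ w ∈ σ, f (v + w) ≤ f v + f w)
    (v : V) (hv : v ∈ σ) (hfv : 0 < f v) :
    IsLUB {t : ℝ | 0 ≤ t ∧ t • v ∈
        convexHull ℝ ({x : V | ∃ w ∈ σ, 0 < f w ∧ x = (f w)⁻¹ • w} ∪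
          {w ∈ σ | f w = 0})}
      (f v)⁻¹ := by
  set C : Set V := {x ∈ σ | f x ≤ 1} with hC
  have hCconv : Convex ℝ C := by
    rintro x ⟨hxσ, hxf⟩ y ⟨hyσ, hyf⟩ a b ha hb hab
    have hax : a • x ∈ σ := hσcone a ha x hxσ
    have hby : b • y ∈ σ := hσcone b hb y hyσ
    refine ⟨hσconv hxσ hyσ ha hb hab, ?_⟩
    calc f (a • x + b • y) ≤ f (a • x) + f (b • y) := hsub _ hax _ hby
      _ = a * f x + b * f y := by rw [hhom a ha x hxσ, hhom b hb y hyσ]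
      _ ≤ a * 1 + b * 1 := by
          gcongr
      _ = 1 := by linarith
  have hsubset : convexHull ℝ ({x : V | ∃ w ∈ σ, 0 < f w ∧ x = (f w)⁻¹ • w} ∪
      {w ∈ σ | f w = 0}) ⊆ C := by
    apply convexHull_min _ hCconv
    rintro x (⟨w, hwσ, hfw, rfl⟩ | ⟨hwσ, hfw⟩)
    · have hinv : (0:ℝ) ≤ (f w)⁻¹ := inv_nonneg.2 hfw.le
      refine ⟨hσcone _ hinv w hwσ, ?_⟩
      rw [hhom _ hinv w hwσ, inv_mul_cancel₀ hfw.ne']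
    · exact ⟨hwσ, by rw [hfw]; norm_num⟩
  constructor
  · rintro t ⟨ht0, htmem⟩
    have := (hsubset htmem).2
    rw [hhom t ht0 v hv] at this
    rw [← one_div]
    exact (le_div_iff₀ hfv).2 this
  · intro b hb
    apply hb
    refine ⟨inv_nonneg.2 hfv.le, ?_⟩
    exact subset_convexHull ℝ _ (Or.inl ⟨v, hv, hfv, rfl⟩)
end

section
/- Let V be a finite-dimensional real inner product space, let σ ⊆ V be a convex cone containing 0, and let f : V → ℝ be nonnegative, positively homogeneous (f(t•v) = t·f(v) for t ≥ 0, v ∈ σ), and subadditive (f(v+w) ≤ f(v) + f(w) for v, w ∈ σ) on σ. Then the convex hull of {(f(w))^{-1}•w | w ∈ σ, f(w) > 0} ∪ {w ∈ σ | f(w) = 0} equals the sublevel set {v ∈ σ | f(v) ≤ 1}. -/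
open RealInnerProductSpace

/-- For a nonnegative, positively homogeneous, subadditive function `f` on a convex
cone `σ ∋ 0`, the polyhedron `∇_f = conv({f(w)⁻¹ • w | w ∈ σ, f w > 0} ∪ {w ∈ σ |
f w = 0})` coincides with the sublevel set `{v ∈ σ | f v ≤ 1}`. -/
theorem nabla_f_eq_sublevel
    {V : Type*} [NormedAddCommGroup V] [InnerProductSpace ℝ V]
    [FiniteDimensional ℝ V]
    (σ : Set V) (hσconv : Convex ℝ σ) (h0 : (0 : V) ∈ σ)
    (hσcone : ∀ t : ℝ, 0 ≤ t → ∀ v ∈ σ, t • v ∈ σ)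
    (f : V → ℝ)
    (hnn : ∀ v ∈ σ, 0 ≤ f v)
    (hhom : ∀ t : ℝ, 0 ≤ t → ∀ v ∈ σ, f (t • v) = t * f v)
    (hsub : ∀ v ∈ σ, ∀ w ∈ σ, f (v + w) ≤ f v + f w) :
    convexHull ℝ ({x : V | ∃ w ∈ σ, 0 < f w ∧ x = (f w)⁻¹ • w} ∪
        {w ∈ σ | f w = 0}) =
      {v ∈ σ | f v ≤ 1} := by
  have hf0 : f 0 = 0 := by
    have := hhom 0 le_rfl 0 h0
    simpa using this
  have hSconv : Convex ℝ {v ∈ σ | f v ≤ 1} := by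
    intro v hv w hw a b ha hb hab
    refine ⟨hσconv hv.1 hw.1 ha hb hab, ?_⟩
    have hav : a • v ∈ σ := hσcone a ha v hv.1
    have hbw : b • w ∈ σ := hσcone b hb w hw.1
    calc f (a • v + b • w) ≤ f (a • v) + f (b • w) := hsub _ hav _ hbw
      _ = a * f v + b * f w := by
          rw [hhom a ha v hv.1, hhom b hb w hw.1]
      _ ≤ a * 1 + b * 1 := by
          gcongr
          exacts [hv.2, hw.2]
      _ = 1 := by linarith
  apply Set.Subset.antisymm
  · apply convexHull_min _ hSconv
    rintro x (⟨w, hw, hfw, rfl⟩ | ⟨hw, hfw⟩)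
    · have hinv : (0:ℝ) ≤ (f w)⁻¹ := inv_nonneg.2 hfw.le
      refine ⟨hσcone _ hinv w hw, ?_⟩
      rw [hhom _ hinv w hw, inv_mul_cancel₀ hfw.ne']
    · exact ⟨hw, by rw [hfw]; exact zero_le_one⟩
  · rintro v ⟨hv, hfv⟩
    rcases eq_or_lt_of_le (hnn v hv) with h | h
    · exact subset_convexHull ℝ _ (Or.inr ⟨hv, h.symm⟩)
    · have h0mem : (0:V) ∈ ({x : V | ∃ w ∈ σ, 0 < f w ∧ x = (f w)⁻¹ • w} ∪
          {w ∈ σ | f w = 0}) := Or.inr ⟨h0, hf0⟩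
      have hxmem : (f v)⁻¹ • v ∈ ({x : V | ∃ w ∈ σ, 0 < f w ∧ x = (f w)⁻¹ • w} ∪
          {w ∈ σ | f w = 0}) := Or.inl ⟨v, hv, h, rfl⟩
      have hconv := (convex_convexHull ℝ ({x : V | ∃ w ∈ σ, 0 < f w ∧ x = (f w)⁻¹ • w} ∪
          {w ∈ σ | f w = 0}))
      have := hconv (subset_convexHull ℝ _ hxmem) (subset_convexHull ℝ _ h0mem)
        (a := f v) (b := 1 - f v) h.le (by linarith) (by ring)
      have heq : f v • (f v)⁻¹ • v + (1 - f v) • (0:V) = v := by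
        rw [smul_smul, mul_inv_cancel₀ h.ne', one_smul, smul_zero, add_zero]
      rwa [heq] at this
end

section
/- Let V be a finite-dimensional real inner product space and let Δ ⊆ V be a nonempty closed convex set. Then the closure in V × ℝ of the set {t•(v, 1) | t > 0, v ∈ Δ} equals the disjoint union {t•(v, 1) | t > 0, v ∈ Δ} ∪ (tail(Δ) × {0}), where tail(Δ) := {x ∈ V | w + t•x ∈ Δ for all w ∈ Δ and all t ≥ 0} is the recession cone of Δ. In particular, Δ is recovered as the intersection of this closed cone with V × {1}. -/
open RealInnerProductSpace

/-- The open cone over `Δ` at height `1` in `V × ℝ`: `{t • (v, 1) | t > 0, v ∈ Δ}`. -/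
def posConeOver {V : Type*} [AddCommGroup V] [Module ℝ V] (Δ : Set V) :
    Set (V × ℝ) :=
  {p : V × ℝ | ∃ t : ℝ, 0 < t ∧ ∃ v ∈ Δ, p = t • ((v, 1) : V × ℝ)}

/-- The tail (recession) cone of a set `S ⊆ V`. -/
def tailCone {V : Type*} [AddCommGroup V] [Module ℝ V] (S : Set V) : Set V :=
  {x : V | ∀ w ∈ S, ∀ t : ℝ, 0 ≤ t → w + t • x ∈ S}

/-!
A point `t • (v, 1)` of the cone is recovered from its height by `v = t⁻¹ • (t • v)`, a map
continuous where the height is positive; as `Δ` is closed, limits of positive height stay in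
the cone. At height `0`, take `w ∈ Δ` and `s ≥ 0`: by convexity the points
`(1 - s t) • w + s • (t • v)` of `Δ` converge to `w + s • x` along the cone as `t • (v, 1)`
tends to `(x, 0)`, so `x` is a recession direction. Conversely, for a recession direction `x`,
the cone points `(t • w + x, t) = t • (w + t⁻¹ • x, 1)` tend to `(x, 0)` as `t → 0⁺`.
-/

section

variable {V : Type*} [AddCommGroup V] [Module ℝ V]

theorem mem_posConeOver_iff {Δ : Set V} {p : V × ℝ} :
    p ∈ posConeOver Δ ↔ 0 < p.2 ∧ p.2⁻¹ • p.1 ∈ Δ := by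
  constructor
  · rintro ⟨t, ht, v, hv, rfl⟩
    simpa [ht, smul_smul, ht.ne'] using hv
  · rintro ⟨hpos, hmem⟩
    refine ⟨p.2, hpos, _, hmem, ?_⟩
    ext <;> simp [smul_inv_smul₀ hpos.ne']

theorem disjoint_posConeOver_prod_zero (Δ : Set V) (T : Set V) :
    Disjoint (posConeOver Δ) (T ×ˢ {(0 : ℝ)}) :=
  Set.disjoint_left.2 fun _ hp hT => (mem_posConeOver_iff.1 hp).1.ne' hT.2

theorem posConeOver_inter_univ_prod_one (Δ : Set V) :
    posConeOver Δ ∩ Set.univ ×ˢ {(1 : ℝ)} = Δ ×ˢ {(1 : ℝ)} := by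
  ext ⟨v, r⟩
  simp only [Set.mem_inter_iff, mem_posConeOver_iff, Set.mem_prod, Set.mem_univ,
    Set.mem_singleton_iff, true_and]
  constructor
  · rintro ⟨⟨-, hv⟩, rfl⟩
    simpa using hv
  · rintro ⟨hv, rfl⟩
    simpa using hv

end

section

variable {V : Type*} [AddCommGroup V] [Module ℝ V] [TopologicalSpace V]

open Filter Topology

theorem nonneg_of_mem_closure_posConeOver {Δ : Set V} {p : V × ℝ}
    (hp : p ∈ closure (posConeOver Δ)) : 0 ≤ p.2 :=
  closure_minimal (fun _ hq => (mem_posConeOver_iff.1 hq).1.le)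
    (isClosed_le continuous_const continuous_snd) hp

variable [ContinuousSMul ℝ V]

theorem mem_posConeOver_of_mem_closure_of_pos {Δ : Set V} (hcl : IsClosed Δ) {p : V × ℝ}
    (hp : p ∈ closure (posConeOver Δ)) (hpos : 0 < p.2) : p ∈ posConeOver Δ := by
  have hdehom : Tendsto (fun q : V × ℝ => q.2⁻¹ • q.1) (𝓝[posConeOver Δ] p)
      (𝓝 (p.2⁻¹ • p.1)) :=
    (((continuous_snd.tendsto p).inv₀ hpos.ne').smul (continuous_fst.tendsto p)).mono_left
      nhdsWithin_le_nhds
  have := mem_closure_iff_nhdsWithin_neBot.1 hp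
  exact mem_posConeOver_iff.2 ⟨hpos, hcl.mem_of_tendsto hdehom
    (eventually_nhdsWithin_of_forall fun q hq => (mem_posConeOver_iff.1 hq).2)⟩

variable [ContinuousAdd V]

theorem mem_tailCone_of_mem_closure_posConeOver {Δ : Set V} (hcl : IsClosed Δ)
    (hconv : Convex ℝ Δ) {x : V} (hx : (x, (0 : ℝ)) ∈ closure (posConeOver Δ)) :
    x ∈ tailCone Δ := by
  intro w hw s hs
  set l := 𝓝[posConeOver Δ] (x, (0 : ℝ))
  have : l.NeBot := mem_closure_iff_nhdsWithin_neBot.1 hx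
  have hheight : Tendsto (fun q : V × ℝ => s * q.2) l (𝓝 0) := by
    simpa using ((continuous_snd.tendsto (x, (0 : ℝ))).const_mul s).mono_left
      nhdsWithin_le_nhds
  have hlim : Tendsto (fun q : V × ℝ => (1 - s * q.2) • w + s • q.1) l (𝓝 (w + s • x)) := by
    have := (((tendsto_const_nhds (x := (1 : ℝ))).sub hheight).smul
      (tendsto_const_nhds (x := w))).add
      (((continuous_fst.tendsto (x, (0 : ℝ))).mono_left nhdsWithin_le_nhds).const_smul s)
    simpa using this
  refine hcl.mem_of_tendsto hlim ?_
  filter_upwards [self_mem_nhdsWithin, hheight.eventually (eventually_le_nhds one_pos)]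
    with q hq hsq
  obtain ⟨t, ht, v, hv, rfl⟩ := hq
  simp only [Prod.smul_snd, smul_eq_mul, mul_one] at hsq
  simpa [smul_smul] using
    hconv hw hv (by linarith : (0 : ℝ) ≤ 1 - s * t) (mul_nonneg hs ht.le) (by ring)

theorem tailCone_prod_zero_subset_closure_posConeOver {Δ : Set V} (hne : Δ.Nonempty) :
    (tailCone Δ) ×ˢ {(0 : ℝ)} ⊆ closure (posConeOver Δ) := by
  rintro ⟨x, r⟩ ⟨hx, rfl : r = 0⟩
  obtain ⟨w, hw⟩ := hne
  have hcurve : Continuous fun t : ℝ => (t • w + x, t) := by fun_prop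
  have hmaps : Set.MapsTo (fun t : ℝ => (t • w + x, t)) (Set.Ioi 0) (posConeOver Δ) := by
    intro t (ht : 0 < t)
    refine mem_posConeOver_iff.2 ⟨ht, ?_⟩
    simpa [smul_add, smul_smul, ht.ne'] using hx w hw t⁻¹ (inv_nonneg.2 ht.le)
  simpa using map_mem_closure hcurve (by simp : (0 : ℝ) ∈ closure (Set.Ioi 0)) hmaps

theorem closure_posConeOver {Δ : Set V} (hne : Δ.Nonempty) (hcl : IsClosed Δ)
    (hconv : Convex ℝ Δ) :
    closure (posConeOver Δ) = posConeOver Δ ∪ (tailCone Δ) ×ˢ {(0 : ℝ)} := by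
  refine subset_antisymm (fun p hp => ?_)
    (Set.union_subset subset_closure (tailCone_prod_zero_subset_closure_posConeOver hne))
  rcases (nonneg_of_mem_closure_posConeOver hp).eq_or_lt' with h0 | hpos
  · right
    obtain ⟨x, r⟩ := p
    obtain rfl : r = 0 := h0
    exact ⟨mem_tailCone_of_mem_closure_posConeOver hcl hconv hp, rfl⟩
  · exact Or.inl (mem_posConeOver_of_mem_closure_of_pos hcl hp hpos)

end

theorem closure_posConeOver_eq_union_tail_general
    {V : Type*} [NormedAddCommGroup V] [InnerProductSpace ℝ V]
    (Δ : Set V) (hne : Δ.Nonempty) (hcl : IsClosed Δ) (hconv : Convex ℝ Δ) :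
    closure (posConeOver Δ) = posConeOver Δ ∪ (tailCone Δ) ×ˢ {(0 : ℝ)} ∧
      Disjoint (posConeOver Δ) ((tailCone Δ) ×ˢ {(0 : ℝ)}) ∧
      closure (posConeOver Δ) ∩ (Set.univ ×ˢ {(1 : ℝ)}) = Δ ×ˢ {(1 : ℝ)} := by
  have hclosure := closure_posConeOver hne hcl hconv
  refine ⟨hclosure, disjoint_posConeOver_prod_zero Δ _, ?_⟩
  have hslices : Disjoint ((tailCone Δ) ×ˢ {(0 : ℝ)}) (Set.univ ×ˢ {(1 : ℝ)}) :=
    Set.disjoint_prod.2 (Or.inr (by simp))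
  rw [hclosure, Set.union_inter_distrib_right, hslices.inter_eq, Set.union_empty,
    posConeOver_inter_univ_prod_one]

/-- **(4.1 dualPol).** For a nonempty closed convex set `Δ ⊆ V`, the closed cone
`C(Δ) = closure(ℝ_{>0} • (Δ × {1}))` decomposes as the disjoint union of
`ℝ_{>0} • (Δ × {1})` and `tail(Δ) × {0}`; in particular `Δ` is recovered as the
cross-section of `C(Δ)` at height `1`. -/
theorem closure_posConeOver_eq_union_tail
    {V : Type*} [NormedAddCommGroup V] [InnerProductSpace ℝ V]
    [FiniteDimensional ℝ V]
    (Δ : Set V) (hne : Δ.Nonempty) (hcl : IsClosed Δ) (hconv : Convex ℝ Δ) :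
    closure (posConeOver Δ) = posConeOver Δ ∪ (tailCone Δ) ×ˢ {(0 : ℝ)} ∧
      Disjoint (posConeOver Δ) ((tailCone Δ) ×ˢ {(0 : ℝ)}) ∧
      closure (posConeOver Δ) ∩ (Set.univ ×ˢ {(1 : ℝ)}) = Δ ×ˢ {(1 : ℝ)} :=
  closure_posConeOver_eq_union_tail_general Δ hne hcl hconv
end
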